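/- arXiv:2201.03228 — 2 statements merged into one kernel-verified Lean document; each statement's English description precedes it below -/
import Mathlib

section
/- Let Λ ⊂ ℕ² be a finite downward closed set and define the sparse interpolation operator I_Λ = ∑_{ν ∈ Λ} Δ_{ν_1}^{(1)} Δ_{ν_2}^{(2)}. Then for every g : ℝ × ℝ → ℝ, the sparse interpolant reproduces g at the associated sparse grid: (I_Λ g)(z_{ν_1}, z_{ν_2}) = g(z_{ν_1}, z_{ν_2}) for every ν = (ν_1, ν_2) ∈ Λ. -/
/-- `interpOp z k g` is (the evaluation function of) the unique polynomial of degree `< k`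
interpolating `g` at the first `k` nodes `z_0, …, z_{k-1}`.  In particular `interpOp z 0`
is the zero operator, so the paper's operator `I_k` is `interpOp z (k+1)` and
`I_{-1} = interpOp z 0 = 0`. -/
noncomputable def interpOp (z : ℕ → ℝ) (k : ℕ) (g : ℝ → ℝ) : ℝ → ℝ :=
  fun x => (Lagrange.interpolate (Finset.range k) z (fun i => g (z i))).eval x

/-- The slice operator interpolating in the first variable with the second frozen;
the paper's `I_k^{(1)}` is `sliceInterp1 z (k+1)`. -/
noncomputable def sliceInterp1 (z : ℕ → ℝ) (k : ℕ) (g : ℝ × ℝ → ℝ) : ℝ × ℝ → ℝ :=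
  fun p => interpOp z k (fun t => g (t, p.2)) p.1

/-- The slice operator interpolating in the second variable with the first frozen;
the paper's `I_l^{(2)}` is `sliceInterp2 z (l+1)`. -/
noncomputable def sliceInterp2 (z : ℕ → ℝ) (l : ℕ) (g : ℝ × ℝ → ℝ) : ℝ × ℝ → ℝ :=
  fun p => interpOp z l (fun t => g (p.1, t)) p.2

/-- The slice difference operator `Δ_k^{(1)} = I_k^{(1)} - I_{k-1}^{(1)}`. -/
noncomputable def sliceDelta1 (z : ℕ → ℝ) (k : ℕ) (g : ℝ × ℝ → ℝ) : ℝ × ℝ → ℝ :=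
  fun p => sliceInterp1 z (k + 1) g p - sliceInterp1 z k g p

/-- The slice difference operator `Δ_l^{(2)} = I_l^{(2)} - I_{l-1}^{(2)}`. -/
noncomputable def sliceDelta2 (z : ℕ → ℝ) (l : ℕ) (g : ℝ × ℝ → ℝ) : ℝ × ℝ → ℝ :=
  fun p => sliceInterp2 z (l + 1) g p - sliceInterp2 z l g p

/-- A finite set `Λ ⊆ ℕ²` of multi-indices is downward closed if `ν ∈ Λ` and
`μ_i ≤ ν_i` for `i = 1, 2` imply `μ ∈ Λ`. -/
def DownwardClosed (Λ : Finset (ℕ × ℕ)) : Prop :=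
  ∀ ν ∈ Λ, ∀ μ : ℕ × ℕ, μ.1 ≤ ν.1 → μ.2 ≤ ν.2 → μ ∈ Λ

/-- The sparse interpolation operator `I_Λ = ∑_{ν ∈ Λ} Δ_{ν₁}^{(1)} Δ_{ν₂}^{(2)}`. -/
noncomputable def sparseInterp (z : ℕ → ℝ) (Λ : Finset (ℕ × ℕ)) (g : ℝ × ℝ → ℝ) :
    ℝ × ℝ → ℝ :=
  fun p => ∑ ν ∈ Λ, sliceDelta1 z ν.1 (sliceDelta2 z ν.2 g) p

/-!
At a grid point `(z a, z b)` the term `Δ_k^{(1)} Δ_l^{(2)} g` vanishes as soon as `k > a` or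
`l > b`: the one-dimensional interpolants `I_k` and `I_{k-1}` both reproduce a function at the
node `z a`, and `Δ_l^{(2)} g` vanishes identically on the line `y = z b`. Since `Λ` is downward
closed it contains the rectangle `[0, a] × [0, b]`, so the sparse interpolant at `(z a, z b)`
equals the sum over that rectangle, which telescopes to the tensor-product interpolant
`I_a^{(1)} I_b^{(2)} g`; this interpolates `g` at `(z a, z b)`.
-/

open Finset

variable {z : ℕ → ℝ}

theorem interpOp_zero (g : ℝ → ℝ) : interpOp z 0 g = 0 := by
  ext x
  simp [interpOp]

theorem interpOp_apply_node (hz : Function.Injective z) {a k : ℕ} (hak : a < k)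
    (g : ℝ → ℝ) : interpOp z k g (z a) = g (z a) :=
  Lagrange.eval_interpolate_at_node _ hz.injOn (mem_range.mpr hak)

theorem interpOp_eq_zero_of_forall_node {g : ℝ → ℝ} (hg : ∀ i, g (z i) = 0) (k : ℕ)
    (x : ℝ) : interpOp z k g x = 0 := by
  simp [interpOp, hg]

theorem interpOp_sum {ι : Type*} (k : ℕ) (s : Finset ι) (f : ι → ℝ → ℝ) (x : ℝ) :
    interpOp z k (fun t => ∑ i ∈ s, f i t) x = ∑ i ∈ s, interpOp z k (f i) x := by
  simp only [interpOp]
  rw [← Polynomial.eval_finsetSum, ← map_sum]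
  congr 2
  ext i
  simp

theorem sum_range_sliceDelta1 (K : ℕ) (f : ℝ × ℝ → ℝ) :
    ∑ k ∈ range K, sliceDelta1 z k f = sliceInterp1 z K f := by
  rw [show sliceInterp1 z K f = sliceInterp1 z K f - sliceInterp1 z 0 f by
    ext p; simp [sliceInterp1, interpOp_zero]]
  exact sum_range_sub (fun k => sliceInterp1 z k f) K

theorem sum_range_sliceDelta2 (L : ℕ) (g : ℝ × ℝ → ℝ) :
    ∑ l ∈ range L, sliceDelta2 z l g = sliceInterp2 z L g := by
  rw [show sliceInterp2 z L g = sliceInterp2 z L g - sliceInterp2 z 0 g by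
    ext p; simp [sliceInterp2, interpOp_zero]]
  exact sum_range_sub (fun l => sliceInterp2 z l g) L

theorem sliceDelta1_sum {ι : Type*} (k : ℕ) (s : Finset ι) (f : ι → ℝ × ℝ → ℝ) :
    sliceDelta1 z k (∑ i ∈ s, f i) = ∑ i ∈ s, sliceDelta1 z k (f i) := by
  ext p
  simp only [sliceDelta1, sliceInterp1, Finset.sum_apply, interpOp_sum, Finset.sum_sub_distrib]

theorem sliceDelta1_apply_node (hz : Function.Injective z) {a k : ℕ} (hak : a < k)
    (f : ℝ × ℝ → ℝ) (y : ℝ) : sliceDelta1 z k f (z a, y) = 0 := by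
  simp only [sliceDelta1, sliceInterp1, interpOp_apply_node hz hak,
    interpOp_apply_node hz (hak.trans k.lt_succ_self), sub_self]

theorem sliceDelta2_apply_node (hz : Function.Injective z) {b l : ℕ} (hbl : b < l)
    (g : ℝ × ℝ → ℝ) (x : ℝ) : sliceDelta2 z l g (x, z b) = 0 := by
  simp only [sliceDelta2, sliceInterp2, interpOp_apply_node hz hbl,
    interpOp_apply_node hz (hbl.trans l.lt_succ_self), sub_self]

theorem sliceDelta1_sliceDelta2_apply_node (hz : Function.Injective z) {b l : ℕ} (hbl : b < l)
    (k : ℕ) (g : ℝ × ℝ → ℝ) (x : ℝ) : sliceDelta1 z k (sliceDelta2 z l g) (x, z b) = 0 := by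
  simp only [sliceDelta1, sliceInterp1, sub_self,
    interpOp_eq_zero_of_forall_node (g := fun t => sliceDelta2 z l g (t, z b))
      fun i => sliceDelta2_apply_node hz hbl g (z i)]

theorem sliceInterp1_sliceInterp2_apply_node (hz : Function.Injective z) {a b A B : ℕ}
    (ha : a < A) (hb : b < B) (g : ℝ × ℝ → ℝ) :
    sliceInterp1 z A (sliceInterp2 z B g) (z a, z b) = g (z a, z b) := by
  simp only [sliceInterp1, interpOp_apply_node hz ha, sliceInterp2, interpOp_apply_node hz hb]

theorem sparseInterp_range_product (A B : ℕ) (g : ℝ × ℝ → ℝ) :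
    sparseInterp z (range A ×ˢ range B) g = sliceInterp1 z A (sliceInterp2 z B g) := by
  rw [← sum_range_sliceDelta2, ← sum_range_sliceDelta1]
  ext p
  simp only [sparseInterp, sum_product, sliceDelta1_sum, Finset.sum_apply]

theorem sparseInterp_apply_node_eq_range_product (hz : Function.Injective z)
    {Λ : Finset (ℕ × ℕ)} (hΛ : DownwardClosed Λ) {a b : ℕ} (hab : (a, b) ∈ Λ)
    (g : ℝ × ℝ → ℝ) :
    sparseInterp z Λ g (z a, z b) =
      sparseInterp z (range (a + 1) ×ˢ range (b + 1)) g (z a, z b) := by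
  refine (sum_subset (fun μ hμ => ?_) fun μ _ hμ => ?_).symm
  · simp only [mem_product, mem_range, Nat.lt_succ_iff] at hμ
    exact hΛ _ hab μ hμ.1 hμ.2
  · simp only [mem_product, mem_range, Nat.lt_succ_iff, not_and_or, not_le] at hμ
    rcases hμ with ha | hb
    · exact sliceDelta1_apply_node hz ha _ _
    · exact sliceDelta1_sliceDelta2_apply_node hz hb _ _ _

theorem sparse_interp_reproduces_at_sparse_grid_general
    (z : ℕ → ℝ) (hdist : Function.Injective z)
    (Λ : Finset (ℕ × ℕ)) (hΛ : DownwardClosed Λ)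
    (g : ℝ × ℝ → ℝ) :
    ∀ ν ∈ Λ, sparseInterp z Λ g (z ν.1, z ν.2) = g (z ν.1, z ν.2) := by
  rintro ⟨a, b⟩ hν
  rw [sparseInterp_apply_node_eq_range_product hdist hΛ hν, sparseInterp_range_product]
  exact sliceInterp1_sliceInterp2_apply_node hdist a.lt_succ_self b.lt_succ_self g

/-- For a finite downward closed set `Λ ⊆ ℕ²`, the sparse interpolant reproduces `g`
at the associated sparse grid: `(I_Λ g)(z_{ν₁}, z_{ν₂}) = g(z_{ν₁}, z_{ν₂})` for every
`ν ∈ Λ`. -/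
theorem sparse_interp_reproduces_at_sparse_grid
    (z : ℕ → ℝ) (hdist : Function.Injective z)
    (hmem : ∀ k, z k ∈ Set.Icc (-1 : ℝ) 1)
    (Λ : Finset (ℕ × ℕ)) (hΛ : DownwardClosed Λ)
    (g : ℝ × ℝ → ℝ) :
    ∀ ν ∈ Λ, sparseInterp z Λ g (z ν.1, z ν.2) = g (z ν.1, z ν.2) :=
  sparse_interp_reproduces_at_sparse_grid_general z hdist Λ hΛ g
end

section
/- Let Λ ⊂ ℕ² be a finite downward closed set and define the sparse interpolation operator I_Λ = ∑_{ν ∈ Λ} Δ_{ν_1}^{(1)} Δ_{ν_2}^{(2)}. Then I_Λ is exact on the polynomial space spanned by the monomials associated with Λ: for every bivariate polynomial p(x,y) = ∑_{ν ∈ Λ} c_ν x^{ν_1} y^{ν_2} with real coefficients c_ν, one has I_Λ p = p. -/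
/-- Linearity of `interpOp` on sums of scaled monomials. -/
lemma interp_sum_mul {α : Type*} (z : ℕ → ℝ) (k : ℕ) (s : Finset α)
    (a : α → ℝ) (m : α → ℕ) (x : ℝ) :
    interpOp z k (fun t => ∑ μ ∈ s, a μ * t ^ m μ) x
      = ∑ μ ∈ s, a μ * interpOp z k (fun t => t ^ m μ) x := by
  unfold interpOp
  have h : (fun i => ∑ μ ∈ s, a μ * (z i) ^ m μ)
      = ∑ μ ∈ s, a μ • (fun i => (z i) ^ m μ) := by
    funext i; simp [Finset.sum_apply, smul_eq_mul]
  rw [h, map_sum, Polynomial.eval_finset_sum]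
  refine Finset.sum_congr rfl fun μ _ => ?_
  rw [map_smul, Polynomial.eval_smul, smul_eq_mul]

/-- Exactness of interpolation on monomials of small degree. -/
lemma interp_exact (z : ℕ → ℝ) (hz : Function.Injective z) {m k : ℕ} (h : m < k) (x : ℝ) :
    interpOp z k (fun t => t ^ m) x = x ^ m := by
  unfold interpOp
  have hinj : Set.InjOn z (Finset.range k) := hz.injOn
  have hdeg : (Polynomial.X ^ m : Polynomial ℝ).degree < (Finset.range k).card := by
    rw [Polynomial.degree_X_pow, Finset.card_range]
    exact_mod_cast h
  have h2 := Lagrange.eq_interpolate hinj hdeg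
  simp only [Polynomial.eval_pow, Polynomial.eval_X] at h2
  rw [← h2]
  simp

/-- The univariate difference operator applied to a monomial. -/
noncomputable def dOp (z : ℕ → ℝ) (k m : ℕ) (x : ℝ) : ℝ :=
  interpOp z (k + 1) (fun t => t ^ m) x - interpOp z k (fun t => t ^ m) x

lemma dOp_eq_zero (z : ℕ → ℝ) (hz : Function.Injective z) {k m : ℕ} (h : m < k) (x : ℝ) :
    dOp z k m x = 0 := by
  rw [dOp, interp_exact z hz (h.trans (Nat.lt_succ_self k)) x, interp_exact z hz h x, sub_self]

lemma sum_dOp (z : ℕ → ℝ) (hz : Function.Injective z) (m : ℕ) (x : ℝ) :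
    ∑ k ∈ Finset.range (m + 1), dOp z k m x = x ^ m := by
  have := Finset.sum_range_sub (fun k => interpOp z k (fun t => t ^ m) x) (m + 1)
  rw [show (∑ k ∈ Finset.range (m + 1), dOp z k m x)
      = ∑ k ∈ Finset.range (m + 1),
        (interpOp z (k+1) (fun t => t ^ m) x - interpOp z k (fun t => t ^ m) x) from rfl,
    this, interp_exact z hz (Nat.lt_succ_self m) x]
  simp [interpOp]

lemma key_sum (z : ℕ → ℝ) (hz : Function.Injective z)
    (Λ : Finset (ℕ × ℕ)) (hΛ : DownwardClosed Λ)
    {μ : ℕ × ℕ} (hμ : μ ∈ Λ) (x y : ℝ) :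
    ∑ ν ∈ Λ, dOp z ν.1 μ.1 x * dOp z ν.2 μ.2 y = x ^ μ.1 * y ^ μ.2 := by
  have hsub : Finset.range (μ.1 + 1) ×ˢ Finset.range (μ.2 + 1) ⊆ Λ := by
    intro ν hν
    rw [Finset.mem_product, Finset.mem_range, Finset.mem_range] at hν
    exact hΛ μ hμ ν (Nat.lt_succ_iff.mp hν.1) (Nat.lt_succ_iff.mp hν.2)
  rw [← Finset.sum_subset hsub (fun ν _ hν => ?_)]
  · rw [Finset.sum_product, ← sum_dOp z hz μ.1 x, ← sum_dOp z hz μ.2 y, Finset.sum_mul_sum]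
  · rw [Finset.mem_product, Finset.mem_range, Finset.mem_range] at hν
    push_neg at hν
    rcases lt_or_ge μ.1 ν.1 with h | h
    · rw [dOp_eq_zero z hz h, zero_mul]
    · rw [dOp_eq_zero z hz (hν (Nat.lt_succ_iff.mpr h)), mul_zero]

/-- For a finite downward closed set `Λ ⊆ ℕ²`, the sparse interpolation operator `I_Λ`
is exact on the polynomial space spanned by the monomials associated with `Λ`: for every
bivariate polynomial `p(x,y) = ∑_{ν ∈ Λ} c_ν x^{ν₁} y^{ν₂}`, one has `I_Λ p = p`. -/
theorem sparse_interp_exact_on_monomial_span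
    (z : ℕ → ℝ) (hdist : Function.Injective z)
    (hmem : ∀ k, z k ∈ Set.Icc (-1 : ℝ) 1)
    (Λ : Finset (ℕ × ℕ)) (hΛ : DownwardClosed Λ)
    (c : ℕ × ℕ → ℝ) :
    sparseInterp z Λ (fun q => ∑ ν ∈ Λ, c ν * q.1 ^ ν.1 * q.2 ^ ν.2)
      = fun q => ∑ ν ∈ Λ, c ν * q.1 ^ ν.1 * q.2 ^ ν.2 := by
  funext q
  obtain ⟨x, y⟩ := q
  -- Step 1: evaluate the inner difference operator on the monomial sum.
  have h2 : ∀ l : ℕ, ∀ t : ℝ,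
      sliceDelta2 z l (fun q => ∑ ν ∈ Λ, c ν * q.1 ^ ν.1 * q.2 ^ ν.2) (t, y)
        = ∑ μ ∈ Λ, (c μ * dOp z l μ.2 y) * t ^ μ.1 := by
    intro l t
    simp only [sliceDelta2, sliceInterp2]
    rw [interp_sum_mul z (l + 1) Λ (fun μ => c μ * t ^ μ.1) (fun μ => μ.2) y,
      interp_sum_mul z l Λ (fun μ => c μ * t ^ μ.1) (fun μ => μ.2) y,
      ← Finset.sum_sub_distrib]
    refine Finset.sum_congr rfl fun μ _ => ?_
    simp only [dOp]; ring
  have h1 : ∀ ν : ℕ × ℕ,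
      sliceDelta1 z ν.1 (sliceDelta2 z ν.2
          (fun q => ∑ μ ∈ Λ, c μ * q.1 ^ μ.1 * q.2 ^ μ.2)) (x, y)
        = ∑ μ ∈ Λ, c μ * (dOp z ν.1 μ.1 x * dOp z ν.2 μ.2 y) := by
    intro ν
    simp only [sliceDelta1, sliceInterp1]
    have hfun : ∀ k : ℕ,
        interpOp z k (fun t => sliceDelta2 z ν.2
            (fun q => ∑ μ ∈ Λ, c μ * q.1 ^ μ.1 * q.2 ^ μ.2) (t, y)) x
          = ∑ μ ∈ Λ, (c μ * dOp z ν.2 μ.2 y) * interpOp z k (fun t => t ^ μ.1) x := by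
      intro k
      rw [show (fun t => sliceDelta2 z ν.2
            (fun q => ∑ μ ∈ Λ, c μ * q.1 ^ μ.1 * q.2 ^ μ.2) (t, y))
          = fun t => ∑ μ ∈ Λ, (c μ * dOp z ν.2 μ.2 y) * t ^ μ.1 from funext (h2 ν.2),
        interp_sum_mul z k Λ (fun μ => c μ * dOp z ν.2 μ.2 y) (fun μ => μ.1) x]
    rw [hfun (ν.1 + 1), hfun ν.1, ← Finset.sum_sub_distrib]
    refine Finset.sum_congr rfl fun μ _ => ?_
    simp only [dOp]; ring
  simp only [sparseInterp]
  rw [Finset.sum_congr rfl fun ν _ => h1 ν, Finset.sum_comm]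
  refine Finset.sum_congr rfl fun μ hμ => ?_
  rw [← Finset.mul_sum, key_sum z hdist Λ hΛ hμ x y, mul_assoc]
end
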